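/- Let p be a prime, n a positive integer, and b a divisor of n with b > 1, and set k = b·(p^{n/b} − 1). If k is a primitive divisor of p^n − 1 and k is even if p is odd, then GPaley(p^n, k) is isomorphic to the b-fold Cartesian power □^b K_{p^{n/b}} of the complete graph on p^{n/b} vertices (a Hamming graph). -/

import Mathlib

/-- `k` is a primitive divisor of `p ^ n - 1`:  `k` divides `p ^ n - 1`
but `k` does not divide `p ^ a - 1` for any `1 ≤ a < n`. -/
def IsPrimitiveDivisor (p n k : ℕ) : Prop :=
  k ∣ p ^ n - 1 ∧ ∀ a : ℕ, 1 ≤ a → a < n → ¬ k ∣ p ^ a - 1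

/-- The generalised Paley graph `GPaley(p^n, k)`: vertices are the elements of
`GF(p^n)`, and distinct `x, y` are adjacent iff `x - y` is a `d`-th power in
`GF(p^n)^*`, where `d = (p^n - 1)/k`.  (Under the standing hypothesis that `k`
is even when `p` is odd, the underlying relation is symmetric, so taking the
symmetrised relation via `fromRel` yields exactly this graph.) -/
def gpaley (p : ℕ) [Fact p.Prime] (n k : ℕ) : SimpleGraph (GaloisField p n) :=
  SimpleGraph.fromRel fun x y =>
    ∃ z : GaloisField p n, z ≠ 0 ∧ z ^ ((p ^ n - 1) / k) = x - y

/-- The `b`-fold Cartesian (box) power of a simple graph: vertices are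
`b`-tuples, two tuples being adjacent iff they agree in all but one
coordinate and are adjacent in that coordinate. -/
def boxPow {V : Type*} (b : ℕ) (G : SimpleGraph V) : SimpleGraph (Fin b → V) where
  Adj x y := ∃ i, G.Adj (x i) (y i) ∧ ∀ j, j ≠ i → x j = y j
  symm := by
    constructor
    rintro x y ⟨i, hadj, h⟩
    exact ⟨i, hadj.symm, fun j hj => (h j hj).symm⟩
  loopless := by
    constructor
    rintro x ⟨i, hadj, -⟩
    exact G.loopless.irrefl _ hadj

/-! Write `q = p ^ (n / b)`, `k = b * (q - 1)` and `K = GF(p ^ n)`. The `d`-th powers of `Kˣ`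
are exactly the `k`-th roots of unity, since `Kˣ` is cyclic. Let `F = GF(q) ≤ K` and let `γ` be
a primitive `k`-th root of unity. As `(γ ^ b) ^ (q - 1) = 1`, every power of `γ ^ b` lies in `F`,
so the `k`-th roots of unity are exactly the elements `c * γ ^ i` with `c ∈ Fˣ` and `i < b`.
Since `k` is a primitive divisor, `γ` lies in no subfield `GF(q ^ c)` with `c < b`, so its
minimal polynomial over `F` has degree `b` and `1, γ, …, γ ^ (b - 1)` is an `F`-basis of `K`.
In these coordinates `x - y` is a `d`-th power iff it has exactly one nonzero coordinate, which
is adjacency in the Hamming graph. -/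

theorem IsCyclic.range_powMonoidHom_eq_ker {G : Type*} [CommGroup G] [IsCyclic G] [Finite G]
    {d k : ℕ} (h : d * k = Nat.card G) :
    (powMonoidHom d : G →* G).range = (powMonoidHom k).ker := by
  have hd : d ≠ 0 := by rintro rfl; simp at h; exact Nat.card_pos.ne h
  refine Subgroup.eq_of_le_of_card_ge ?_ ?_
  · rintro _ ⟨y, rfl⟩
    rw [MonoidHom.mem_ker, powMonoidHom_apply, powMonoidHom_apply, ← pow_mul, h,
      pow_card_eq_one']
  · rw [IsCyclic.card_powMonoidHom_ker, IsCyclic.card_powMonoidHom_range, ← h,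
      Nat.gcd_eq_right (dvd_mul_left k d), Nat.gcd_eq_right (dvd_mul_right d k),
      Nat.mul_div_cancel_left k (Nat.pos_of_ne_zero hd)]

theorem FiniteField.exists_pow_eq_iff_pow_eq_one {K : Type*} [Field K] [Finite K] {d k : ℕ}
    (h : d * k = Nat.card K - 1) {z : K} (hz : z ≠ 0) :
    (∃ w, w ≠ 0 ∧ w ^ d = z) ↔ z ^ k = 1 := by
  rw [← Nat.card_units] at h
  have hrange := SetLike.ext_iff.mp (IsCyclic.range_powMonoidHom_eq_ker h) (Units.mk0 z hz)
  simp only [MonoidHom.mem_range, MonoidHom.mem_ker, powMonoidHom_apply, Units.ext_iff,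
    Units.val_pow_eq_pow_val, Units.val_mk0, Units.val_one] at hrange
  rw [← hrange]
  exact ⟨fun ⟨w, hw, hwz⟩ => ⟨Units.mk0 w hw, hwz⟩,
    fun ⟨u, hu⟩ => ⟨u, u.ne_zero, hu⟩⟩

theorem FiniteField.exists_isPrimitiveRoot {K : Type*} [Field K] [Finite K] {k : ℕ}
    (hk : k ∣ Nat.card K - 1) : ∃ γ : K, IsPrimitiveRoot γ k := by
  obtain ⟨d, hd⟩ := hk
  obtain ⟨g, hg⟩ := IsCyclic.exists_ofOrder_eq_natCard (α := Kˣ)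
  rw [Nat.card_units, hd] at hg
  exact ⟨(g : K) ^ d, (IsPrimitiveRoot.coe_units_iff.mpr (hg ▸ IsPrimitiveRoot.orderOf g)).pow
    (hg ▸ orderOf_pos g) (mul_comm k d)⟩

namespace Subfield

section

variable {K : Type*} [Field K] (F : Subfield K) [Finite F]

theorem pow_card_sub_one_eq_one {x : K} (hx : x ∈ F) (hx0 : x ≠ 0) :
    x ^ (Nat.card F - 1) = 1 := by
  have := Fintype.ofFinite F
  have h := FiniteField.pow_card_sub_one_eq_one (⟨x, hx⟩ : F)
    fun h => hx0 (congrArg Subtype.val h)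
  rw [← Nat.card_eq_fintype_card] at h
  simpa using congrArg Subtype.val h

theorem mem_of_pow_card_sub_one_eq_one {x : K} (hx : x ^ (Nat.card F - 1) = 1) : x ∈ F := by
  have : NeZero (Nat.card F - 1) := ⟨Nat.sub_ne_zero_of_lt Finite.one_lt_card⟩
  let f : Fˣ →* Kˣ := Units.map F.subtype.toMonoidHom
  have hf : Function.Injective f := Units.map_injective F.subtype_injective
  -- `Fˣ` already supplies `|F| - 1` roots of `X ^ (|F| - 1) - 1`, the most a field can hold.
  have hrange : f.range = rootsOfUnity (Nat.card F - 1) K := by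
    refine Subgroup.eq_of_le_of_card_ge ?_ ?_
    · rintro _ ⟨u, rfl⟩
      rw [mem_rootsOfUnity']
      exact F.pow_card_sub_one_eq_one u.val.2 (by simp [f])
    · rw [← Nat.card_congr (MonoidHom.ofInjective hf).toEquiv, Nat.card_units]
      exact card_rootsOfUnity K _
  have hx0 : x ≠ 0 := by rintro rfl; simp [zero_pow (NeZero.ne _)] at hx
  obtain ⟨u, hu⟩ : Units.mk0 x hx0 ∈ f.range := by
    rw [hrange, mem_rootsOfUnity']; exact hx
  rw [← Units.val_mk0 hx0, ← hu]
  exact u.val.2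

end

section

variable {K : Type*} [Field K] [Finite K] (F : Subfield K)

open IntermediateField in
theorem pow_card_pow_natDegree_minpoly_sub_one_eq_one {x : K} (hx : x ≠ 0) :
    x ^ (Nat.card F ^ (minpoly F x).natDegree - 1) = 1 := by
  have hcard : Nat.card F⟮x⟯ = Nat.card F ^ (minpoly F x).natDegree := by
    rw [← adjoin.finrank (IsIntegral.of_finite F x), Module.natCard_eq_pow_finrank (K := F)]
  rw [← hcard]
  exact Subfield.pow_card_sub_one_eq_one (F⟮x⟯.toSubfield) (mem_adjoin_simple_self F x) hx

theorem finrank_eq_of_card_eq_pow {b : ℕ} (hK : Nat.card K = Nat.card F ^ b) :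
    Module.finrank F K = b := by
  rw [Module.natCard_eq_pow_finrank (K := F)] at hK
  exact Nat.pow_right_injective (Finite.one_lt_card (α := F)) hK

theorem exists_basis_pow {b : ℕ} (hK : Nat.card K = Nat.card F ^ b) {γ : K} (hγ0 : γ ≠ 0)
    (hγ : ∀ c, 0 < c → c < b → γ ^ (Nat.card F ^ c - 1) ≠ 1) :
    ∃ B : Module.Basis (Fin b) F K, ∀ i, B i = γ ^ (i : ℕ) := by
  have hrank := F.finrank_eq_of_card_eq_pow hK
  have : NeZero b := ⟨by rintro rfl; simp [Finite.one_lt_card.ne'] at hK⟩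
  have hdeg : (minpoly F γ).natDegree = b := by
    refine le_antisymm (hrank ▸ minpoly.natDegree_le γ) (not_lt.mp fun hlt => ?_)
    exact hγ _ (minpoly.natDegree_pos (IsIntegral.of_finite F γ)) hlt
      (F.pow_card_pow_natDegree_minpoly_sub_one_eq_one hγ0)
  have hli : LinearIndependent F fun i : Fin b => γ ^ (i : ℕ) := by
    subst hdeg
    exact linearIndependent_pow γ
  exact ⟨basisOfLinearIndependentOfCardEqFinrank hli (by rw [Fintype.card_fin, hrank]),
    fun i => by rw [coe_basisOfLinearIndependentOfCardEqFinrank]⟩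

end

end Subfield

theorem GaloisField.exists_subfield_card (p : ℕ) [Fact p.Prime] {m n : ℕ} (hm : m ≠ 0)
    (hn : n ≠ 0) (hmn : m ∣ n) : ∃ F : Subfield (GaloisField p n), Nat.card F = p ^ m := by
  obtain ⟨f⟩ := FiniteField.nonempty_algHom_of_finrank_dvd (F := ZMod p)
    (K := GaloisField p m) (L := GaloisField p n)
    (by rwa [GaloisField.finrank p hm, GaloisField.finrank p hn])
  exact ⟨f.fieldRange.toSubfield, by
    rw [← GaloisField.card p m hm]
    exact (Nat.card_congr (AlgEquiv.ofInjectiveField f).toEquiv).symm⟩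

theorem IsPrimitiveRoot.ne_zero_and_pow_eq_one_iff {K : Type*} [Field K] (F : Subfield K)
    [Finite F] {b : ℕ} [NeZero b] {γ : K} (hγ : IsPrimitiveRoot γ (b * (Nat.card F - 1)))
    {z : K} :
    z ≠ 0 ∧ z ^ (b * (Nat.card F - 1)) = 1 ↔
      ∃ i : Fin b, ∃ c : F, c ≠ 0 ∧ z = c * γ ^ (i : ℕ) := by
  have : NeZero (Nat.card F - 1) := ⟨Nat.sub_ne_zero_of_lt Finite.one_lt_card⟩
  have hγ0 : γ ≠ 0 := hγ.ne_zero (NeZero.ne _)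
  constructor
  · rintro ⟨-, hz⟩
    obtain ⟨j, -, rfl⟩ := hγ.eq_pow_of_pow_eq_one hz
    have hc : γ ^ (b * (j / b)) ∈ F := by
      refine F.mem_of_pow_card_sub_one_eq_one ?_
      rw [← pow_mul, mul_right_comm, pow_mul, hγ.pow_eq_one, one_pow]
    refine ⟨⟨j % b, Nat.mod_lt _ (NeZero.pos b)⟩, ⟨_, hc⟩, ?_, ?_⟩
    · exact fun h => pow_ne_zero _ hγ0 (congrArg Subtype.val h)
    · rw [← pow_add, Nat.add_comm, Nat.mod_add_div]
  · rintro ⟨i, c, hc, rfl⟩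
    have hc0 : (c : K) ≠ 0 := fun h => hc (Subtype.ext h)
    refine ⟨mul_ne_zero hc0 (pow_ne_zero _ hγ0), ?_⟩
    rw [mul_pow, ← pow_mul, mul_comm (i : ℕ), pow_mul γ, hγ.pow_eq_one, one_pow, mul_one,
      mul_comm b, pow_mul (c : K), F.pow_card_sub_one_eq_one c.2 hc0, one_pow]

theorem gpaley_adj_iff {p : ℕ} [Fact p.Prime] {n k : ℕ} (hn : n ≠ 0) (hk : k ∣ p ^ n - 1)
    (hneg : (-1 : GaloisField p n) ^ k = 1) {x y : GaloisField p n} :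
    (gpaley p n k).Adj x y ↔ x ≠ y ∧ (x - y) ^ k = 1 := by
  have hdk : (p ^ n - 1) / k * k = Nat.card (GaloisField p n) - 1 := by
    rw [Nat.div_mul_cancel hk, GaloisField.card p n hn]
  have hsymm : (y - x) ^ k = (x - y) ^ k := by
    rw [← neg_sub, neg_eq_neg_one_mul, mul_pow, hneg, one_mul]
  rw [gpaley, SimpleGraph.fromRel_adj, and_congr_right_iff]
  intro hxy
  rw [FiniteField.exists_pow_eq_iff_pow_eq_one hdk (sub_ne_zero.mpr hxy),
    FiniteField.exists_pow_eq_iff_pow_eq_one hdk (sub_ne_zero.mpr hxy.symm), hsymm, or_self]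

def boxPowCongr {V W : Type*} {G : SimpleGraph V} {H : SimpleGraph W} (b : ℕ) (e : G ≃g H) :
    boxPow b G ≃g boxPow b H where
  toEquiv := Equiv.piCongrRight fun _ => e.toEquiv
  map_rel_iff' := by simp [boxPow, e.injective.eq_iff, e.map_adj_iff]

theorem Module.Basis.eq_smul_iff {R V ι : Type*} [Ring R] [AddCommGroup V] [Module R V]
    [Fintype ι] [DecidableEq ι] (B : Module.Basis ι R V) {v : V} {i : ι} {c : R} :
    v = c • B i ↔ B.equivFun v = Pi.single i c := by
  have hBi : B.equivFun (B i) = Pi.single i 1 := by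
    ext j
    simp [B.equivFun_self, Pi.single_apply, eq_comm]
  rw [← B.equivFun.injective.eq_iff, map_smul, hBi, ← Pi.single_smul, smul_eq_mul, mul_one]

theorem Pi.exists_sub_eq_single_iff {ι M : Type*} [DecidableEq ι] [AddGroup M]
    {u v : ι → M} {i : ι} :
    (∃ c, c ≠ 0 ∧ u - v = Pi.single i c) ↔ u i ≠ v i ∧ ∀ j, j ≠ i → u j = v j := by
  constructor
  · rintro ⟨c, hc, huv⟩
    refine ⟨fun h => hc ?_, fun j hj => ?_⟩
    · simpa [h] using (congrFun huv i).symm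
    · simpa [hj, sub_eq_zero] using congrFun huv j
  · rintro ⟨hi, hj⟩
    refine ⟨u i - v i, sub_ne_zero.mpr hi, funext fun j => ?_⟩
    by_cases h : j = i
    · subst h; simp
    · simp [h, hj j h]

noncomputable def Module.Basis.boxPowIso {R V : Type*} [Ring R] [AddCommGroup V] [Module R V]
    {b : ℕ} (B : Module.Basis (Fin b) R V) (G : SimpleGraph V)
    (hG : ∀ x y, G.Adj x y ↔ ∃ i, ∃ c : R, c ≠ 0 ∧ x - y = c • B i) :
    G ≃g boxPow b (⊤ : SimpleGraph R) where
  toEquiv := B.equivFun.toEquiv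
  map_rel_iff' {x y} := by
    simp only [boxPow, hG, B.eq_smul_iff, map_sub, SimpleGraph.top_adj,
      Pi.exists_sub_eq_single_iff]
    rfl

theorem gpaley_iso_hamming_general (p n b : ℕ) [Fact p.Prime] (hn : 0 < n)
    (hbn : b ∣ n)
    (hk : IsPrimitiveDivisor p n (b * (p ^ (n / b) - 1))) :
    Nonempty (gpaley p n (b * (p ^ (n / b) - 1)) ≃g
      boxPow b (⊤ : SimpleGraph (Fin (p ^ (n / b))))) := by
  have : NeZero b := ⟨by rintro rfl; exact hn.ne' (zero_dvd_iff.mp hbn)⟩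
  obtain ⟨m, rfl⟩ := hbn
  have hm : 0 < m := Nat.pos_of_mul_pos_left hn
  rw [Nat.mul_div_cancel_left m (NeZero.pos b)] at hk ⊢
  obtain ⟨F, hF⟩ := GaloisField.exists_subfield_card p hm.ne' hn.ne' (Dvd.intro_left b rfl)
  rw [← hF] at hk ⊢
  have hK : Nat.card (GaloisField p (b * m)) = Nat.card F ^ b := by
    rw [GaloisField.card p _ hn.ne', hF, ← pow_mul, mul_comm]
  obtain ⟨γ, hγ⟩ := FiniteField.exists_isPrimitiveRoot (k := b * (Nat.card F - 1))
    (by rw [GaloisField.card p _ hn.ne']; exact hk.1)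
  have hk0 : b * (Nat.card F - 1) ≠ 0 :=
    mul_ne_zero (NeZero.ne b) (Nat.sub_ne_zero_of_lt Finite.one_lt_card)
  obtain ⟨B, hB⟩ := F.exists_basis_pow hK (hγ.ne_zero hk0) fun c hc hcb hγc =>
    hk.2 (m * c) (Nat.mul_pos hm hc) (by rw [mul_comm b]; exact Nat.mul_lt_mul_of_pos_left hcb hm)
      (by rw [pow_mul, ← hF]; exact hγ.dvd_of_pow_eq_one _ hγc)
  have hneg : (-1 : GaloisField p (b * m)) ^ (b * (Nat.card F - 1)) = 1 := by
    rw [pow_mul', F.pow_card_sub_one_eq_one (neg_mem F.one_mem) (neg_ne_zero.mpr one_ne_zero),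
      one_pow]
  have hadj : ∀ x y, (gpaley p (b * m) (b * (Nat.card F - 1))).Adj x y ↔
      ∃ i, ∃ c : F, c ≠ 0 ∧ x - y = c • B i := by
    intro x y
    rw [gpaley_adj_iff hn.ne' hk.1 hneg, ← sub_ne_zero, hγ.ne_zero_and_pow_eq_one_iff]
    simp only [hB, Subfield.smul_def, smul_eq_mul]
  exact ⟨(B.boxPowIso _ hadj).trans
    (boxPowCongr b (SimpleGraph.Iso.completeGraph (Finite.equivFin F)))⟩

/-- For `b ∣ n` with `b > 1` and `k = b·(p^(n/b) - 1)` a primitive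
divisor of `p^n - 1` (even if `p` is odd), `GPaley(p^n, k)` is isomorphic to
the `b`-fold Cartesian power of the complete graph on `p^(n/b)` vertices
(a Hamming graph). -/
theorem gpaley_iso_hamming (p n b : ℕ) [Fact p.Prime] (hn : 0 < n)
    (hb : 1 < b) (hbn : b ∣ n)
    (hk : IsPrimitiveDivisor p n (b * (p ^ (n / b) - 1)))
    (heven : Odd p → Even (b * (p ^ (n / b) - 1))) :
    Nonempty (gpaley p n (b * (p ^ (n / b) - 1)) ≃g
      boxPow b (⊤ : SimpleGraph (Fin (p ^ (n / b))))) :=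
  gpaley_iso_hamming_general p n b hn hbn hk
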